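/- arXiv:2505.15641 — 2 statements merged into one kernel-verified Lean document; each statement's English description precedes it below -/
import Mathlib

section
/- If $a_1 > a_2 > \cdots > a_{n+1}$ is a strictly decreasing sequence of integers with values in $[1, m]$ (where $m \geq 1$), then $\sum_{i=1}^{n} \frac{a_i - a_{i+1}}{a_i - 1} \leq 1 + \ln m$. -/
/-!
Each term is bounded by the drop of the potential `F a = 1 + log (a - 1)` (with `F 1 = 0`)
from `a i` to `a (i + 1)`: for `b ≥ 2` this is `log t ≥ 1 - 1/t` at `t = (a - 1)/(b - 1)`, and
for `b = 1` the term equals `1 ≤ F a` since `a - 1 ≥ 1` is an integer. The bound telescopes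
to `F (a 0) ≤ 1 + log m`.
-/

open Real Finset

lemma sub_div_le_log_sub_log {x y : ℝ} (hx : 0 < x) (hy : 0 < y) :
    (x - y) / x ≤ log x - log y := by
  have h := one_sub_inv_le_log_of_pos (div_pos hx hy)
  rwa [inv_div, log_div hx.ne' hy.ne', one_sub_div hx.ne'] at h

noncomputable def logPotential (a : ℤ) : ℝ := if a ≤ 1 then 0 else 1 + log ((a : ℝ) - 1)

lemma logPotential_of_two_le {a : ℤ} (ha : 2 ≤ a) : logPotential a = 1 + log ((a : ℝ) - 1) :=
  if_neg (by omega)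

lemma logPotential_nonneg (a : ℤ) : 0 ≤ logPotential a := by
  unfold logPotential
  split_ifs with ha
  · rfl
  · have : (2 : ℝ) ≤ a := by exact_mod_cast (show (2 : ℤ) ≤ a by omega)
    have := log_nonneg (show (1 : ℝ) ≤ a - 1 by linarith)
    linarith

lemma logPotential_le_one_add_log {a : ℤ} {m : ℕ} (ham : a ≤ m) :
    logPotential a ≤ 1 + log m := by
  unfold logPotential
  split_ifs with ha
  · linarith [log_natCast_nonneg m]
  · have h2a : (2 : ℝ) ≤ a := by exact_mod_cast (show (2 : ℤ) ≤ a by omega)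
    have hm : (a : ℝ) ≤ m := by exact_mod_cast ham
    linarith [log_le_log (by linarith) (show (a : ℝ) - 1 ≤ m by linarith)]

lemma sub_div_le_logPotential_sub {a b : ℤ} (hb : 1 ≤ b) (hba : b < a) :
    ((a : ℝ) - b) / ((a : ℝ) - 1) ≤ logPotential a - logPotential b := by
  have h2a : (2 : ℝ) ≤ a := by exact_mod_cast (show (2 : ℤ) ≤ a by omega)
  rw [logPotential_of_two_le (by omega)]
  rcases hb.eq_or_lt with rfl | hb
  · have : logPotential 1 = 0 := if_pos le_rfl
    rw [this, Int.cast_one, div_self (by linarith)]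
    linarith [log_nonneg (show (1 : ℝ) ≤ a - 1 by linarith)]
  · have h2b : (2 : ℝ) ≤ b := by exact_mod_cast (show (2 : ℤ) ≤ b by omega)
    rw [logPotential_of_two_le (by omega)]
    have h := sub_div_le_log_sub_log (x := (a : ℝ) - 1) (y := (b : ℝ) - 1)
      (by linarith) (by linarith)
    rw [sub_sub_sub_cancel_right] at h
    linarith

theorem decreasing_integer_sum_bound_general (m : ℕ) (n : ℕ) (a : ℕ → ℤ)
    (hdec : ∀ i < n, a (i + 1) < a i)
    (hbound : ∀ i ≤ n, 1 ≤ a i ∧ a i ≤ (m : ℤ)) :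
    ∑ i ∈ Finset.range n, ((a i : ℝ) - (a (i + 1) : ℝ)) / ((a i : ℝ) - 1)
      ≤ 1 + Real.log m := by
  calc ∑ i ∈ range n, ((a i : ℝ) - (a (i + 1) : ℝ)) / ((a i : ℝ) - 1)
      ≤ ∑ i ∈ range n, (logPotential (a i) - logPotential (a (i + 1))) := by
        refine sum_le_sum fun i hi => ?_
        have hi := mem_range.mp hi
        exact sub_div_le_logPotential_sub (hbound (i + 1) hi).1 (hdec i hi)
    _ = logPotential (a 0) - logPotential (a n) := sum_range_sub' _ n
    _ ≤ 1 + log m := by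
        linarith [logPotential_nonneg (a n), logPotential_le_one_add_log (hbound 0 n.zero_le).2]

/-- If `a 0 > a 1 > ⋯ > a n` is a strictly decreasing sequence of integers with
values in `[1, m]` (where `m ≥ 1`), then `∑_{i<n} (a i - a (i+1))/(a i - 1) ≤ 1 + ln m`. -/
theorem decreasing_integer_sum_bound (m : ℕ) (hm : 1 ≤ m) (n : ℕ) (a : ℕ → ℤ)
    (hdec : ∀ i < n, a (i + 1) < a i)
    (hbound : ∀ i ≤ n, 1 ≤ a i ∧ a i ≤ (m : ℤ)) :
    ∑ i ∈ Finset.range n, ((a i : ℝ) - (a (i + 1) : ℝ)) / ((a i : ℝ) - 1)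
      ≤ 1 + Real.log m :=
  decreasing_integer_sum_bound_general m n a hdec hbound
end

section
/- Let $V$ be a finite set with $|V| \geq 2$, partitioned into disjoint parts $S_1, \ldots, S_q$ with $|S_1| \geq |S_i|$ for all $i$. Let $p : V \to \mathbb{R}_{\geq 0}$ be a weight function with $p(V) > 0$, and write $p(S) = \sum_{h \in S} p(h)$. Define $\Delta = \sum_{i=1}^q \frac{p(S_i)}{p(V)}(|V| - |S_i|)$, $B = S_1$, and $J = V \setminus S_1$. Then $\frac{\Delta}{|V|-1} \geq \frac{p(J)}{2\,p(V)} + \frac{p(B)}{p(V)} \cdot \frac{|J|}{|V|-1}$. -/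
/-!
Write `n = |V|`. Every part `S i` other than the heaviest one `S 0` is disjoint from `S 0` and no
larger, so `2 |S i| ≤ n` and its score weight `n - |S i|` is at least `n / 2 ≥ (n - 1) / 2`.
Summing over those parts gives `(n - 1) / 2 · p(J)`, while the part `S 0` contributes exactly
`p(B) · |J|`; dividing by `p(V) (n - 1)` gives the bound.
-/

open Finset Function

theorem Finset.two_mul_card_le_of_disjoint {α : Type*} [DecidableEq α] {V A B : Finset α}
    (hA : A ⊆ V) (hB : B ⊆ V) (hAB : Disjoint A B) (hcard : #A ≤ #B) : 2 * #A ≤ #V := by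
  have := card_le_card (union_subset hA hB)
  rw [card_union_of_disjoint hAB] at this
  omega

section Partition

variable {α ι : Type*} [DecidableEq α] [Fintype ι] [DecidableEq ι] {V : Finset α} {S : ι → Finset α}

theorem sum_sdiff_part_eq_sum_erase (hdisj : Pairwise (Disjoint on S))
    (hunion : univ.biUnion S = V) (p : α → ℝ) (i₀ : ι) :
    ∑ h ∈ V \ S i₀, p h = ∑ i ∈ univ.erase i₀, ∑ h ∈ S i, p h := by
  have hsub : S i₀ ⊆ V := hunion ▸ subset_biUnion_of_mem S (mem_univ i₀)
  have htotal : ∑ h ∈ V, p h = ∑ i, ∑ h ∈ S i, p h := by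
    rw [← hunion, sum_biUnion fun i _ j _ hij ↦ hdisj hij]
  rw [sum_sdiff_eq_sub hsub, htotal, ← add_sum_erase _ _ (mem_univ i₀), add_sub_cancel_left]

theorem half_mul_sum_sdiff_add_le_sum_mul_card_sub (hdisj : Pairwise (Disjoint on S))
    (hunion : univ.biUnion S = V) (i₀ : ι) (hmax : ∀ i, #(S i) ≤ #(S i₀))
    (p : α → ℝ) (hp : ∀ h, 0 ≤ p h) :
    (#V : ℝ) / 2 * ∑ h ∈ V \ S i₀, p h + (∑ h ∈ S i₀, p h) * #(V \ S i₀)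
      ≤ ∑ i, (∑ h ∈ S i, p h) * ((#V : ℝ) - #(S i)) := by
  have hsub : ∀ i, S i ⊆ V := fun i ↦ hunion ▸ subset_biUnion_of_mem S (mem_univ i)
  have hcardJ : (#(V \ S i₀) : ℝ) = #V - #(S i₀) := by
    rw [card_sdiff_of_subset (hsub i₀), Nat.cast_sub (card_le_card (hsub i₀))]
  have hweight : ∀ i ∈ univ.erase i₀, (#V : ℝ) / 2 ≤ #V - #(S i) := by
    intro i hi
    have : 2 * #(S i) ≤ #V := two_mul_card_le_of_disjoint (hsub i) (hsub i₀)
      (hdisj (ne_of_mem_erase hi)) (hmax i)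
    have : (2 : ℝ) * #(S i) ≤ #V := by exact_mod_cast this
    linarith
  rw [sum_sdiff_part_eq_sum_erase hdisj hunion, mul_sum, hcardJ,
    ← add_sum_erase _ _ (mem_univ i₀), add_comm]
  refine add_le_add_right (sum_le_sum fun i hi ↦ ?_) _
  rw [mul_comm]
  exact mul_le_mul_of_nonneg_left (hweight i hi) (sum_nonneg fun h _ ↦ hp h)

end Partition

/-- Lemma (score lower bound, single query): for a partition `S 0, …, S (q-1)` of `V`
with heavy part `S 0`, weights `p ≥ 0` with `p(V) > 0`, and
`Δ = ∑ i, (p(S i)/p(V)) (|V| - |S i|)`, `B = S 0`, `J = V \ S 0`, we have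
`Δ/(|V|-1) ≥ p(J)/(2 p(V)) + (p(B)/p(V)) ⬝ |J|/(|V|-1)`. -/
theorem score_lower_bound_single_query {α : Type*} [DecidableEq α]
    (V : Finset α) (hV : 2 ≤ V.card) (q : ℕ) (h0 : 0 < q) (S : Fin q → Finset α)
    (hdisj : ∀ i j : Fin q, i ≠ j → Disjoint (S i) (S j))
    (hunion : Finset.univ.biUnion S = V)
    (hmax : ∀ i : Fin q, (S i).card ≤ (S ⟨0, h0⟩).card)
    (p : α → ℝ) (hp : ∀ h, 0 ≤ p h) (hpV : 0 < ∑ h ∈ V, p h) :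
    (∑ i : Fin q, ((∑ h ∈ S i, p h) / (∑ h ∈ V, p h)) *
        ((V.card : ℝ) - ((S i).card : ℝ))) / ((V.card : ℝ) - 1)
      ≥ (∑ h ∈ V \ S ⟨0, h0⟩, p h) / (2 * ∑ h ∈ V, p h)
        + ((∑ h ∈ S ⟨0, h0⟩, p h) / (∑ h ∈ V, p h)) *
            (((V \ S ⟨0, h0⟩).card : ℝ) / ((V.card : ℝ) - 1)) := by
  set P := ∑ h ∈ V, p h
  set pJ := ∑ h ∈ V \ S ⟨0, h0⟩, p h
  have hn : (0 : ℝ) < #V - 1 := by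
    have : (2 : ℝ) ≤ #V := by exact_mod_cast hV
    linarith
  have hpJ : 0 ≤ pJ := sum_nonneg fun h _ ↦ hp h
  have hbound := half_mul_sum_sdiff_add_le_sum_mul_card_sub (fun i j ↦ hdisj i j) hunion
    ⟨0, h0⟩ hmax p hp
  calc (pJ / (2 * P) + (∑ h ∈ S ⟨0, h0⟩, p h) / P * (#(V \ S ⟨0, h0⟩) / (#V - 1)) : ℝ)
      = ((#V - 1) / 2 * pJ + (∑ h ∈ S ⟨0, h0⟩, p h) * #(V \ S ⟨0, h0⟩)) / (P * (#V - 1)) := by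
        field_simp
    _ ≤ (∑ i, (∑ h ∈ S i, p h) * ((#V : ℝ) - #(S i))) / (P * (#V - 1)) := by
        gcongr
        linarith
    _ = _ := by
        simp only [div_mul_eq_mul_div, ← sum_div, div_div]
end
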